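/- Let k, n ≥ 1, set h̄ = (b-a)/(2kn) and a_i = a + i h̄ for i = 0,…,2kn. Let f_0,…,f_{2kn-1} : [a,b] → ℝ be functions with f_p supported on [a_p, a_{p+1}], each having m-fold iterated integral over its support equal to h̄^{r+m} V_m for all m ≥ 1 (with r ≥ 1 fixed). Let X_j(i) = n(k-j) + i - 1 and let c_0,…,c_{k-1} satisfy Σ_j c_j (1/2 + j/(2k) - x)^{k-1} ≡ 1. Then for any real numbers λ_0,…,λ_{kn-1}: Σ_{j=0}^{k-1} c_j ∫_a^b ∫_a^{y_{k-1}} ⋯ ∫_a^{y_1} Σ_{i=0}^{kn-1} λ_i f_{X_j(i)}(y_0) dy_0 ⋯ dy_{k-1} = (kn)^{-r} (b-a)^{k+r} 2^{-r-1} (V_1/(k-1)!) · ((1/(kn)) Σ_{i=0}^{kn-1} λ_i). -/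

import Mathlib

/-!
Because `f_p` is continuous and vanishes outside `[a_p, a_{p+1}]`, to the right of `a_{p+1}` its
`k`-fold iterated integral from `a` is the polynomial `∑_{u+e=k-1} I_{u+1} (x - a_{p+1})^e / e!`,
where `I_m = h̄^{r+m} V_m` is the `m`-fold integral over the support, the same for every `p`.
For `p = X_j(i)` the distance `b - a_{p+1}` equals `(b - a) (t_j - z_i)` with `t_j = 1/2 + j/(2k)`
and `z_i = i/(2kn)`. Differentiating `∑_j c_j (t_j - x)^{k-1} ≡ 1` shows that
`∑_j c_j (t_j - z)^e` vanishes for `e < k - 1` and is `1` for `e = k - 1`, so in the combination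
over `j` only the term `u = 0`, `e = k - 1` survives, giving `h̄^{r+1} V_1 (b-a)^{k-1} / (k-1)!`
for every `i`.
-/

noncomputable def iterInt (f : ℝ → ℝ) (a : ℝ) : ℕ → ℝ → ℝ
  | 0 => f
  | m + 1 => fun x => ∫ y in a..x, iterInt f a m y

open Finset Polynomial intervalIntegral
open scoped Nat

theorem continuous_iterInt {f : ℝ → ℝ} (hf : Continuous f) (a : ℝ) :
    ∀ m, Continuous (iterInt f a m)
  | 0 => hf
  | m + 1 => continuous_primitive (fun _ _ => (continuous_iterInt hf a m).intervalIntegrable _ _) a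

theorem iterInt_finset_sum_mul {ι : Type*} (s : Finset ι) (lam : ι → ℝ) {g : ι → ℝ → ℝ}
    (hg : ∀ i ∈ s, Continuous (g i)) (a : ℝ) :
    ∀ m x, iterInt (fun y => ∑ i ∈ s, lam i * g i y) a m x
      = ∑ i ∈ s, lam i * iterInt (g i) a m x
  | 0, _ => rfl
  | m + 1, x => by
    simp only [iterInt, iterInt_finset_sum_mul s lam hg a m]
    rw [integral_finsetSum fun i hi =>
      ((continuous_iterInt (hg i hi) a m).intervalIntegrable _ _).const_mul (lam i)]
    simp only [integral_const_mul]

theorem iterInt_eq_zero_of_le {f : ℝ → ℝ} {A : ℝ} (h : ∀ y ≤ A, f y = 0) :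
    ∀ m, ∀ x ≤ A, iterInt f A m x = 0
  | 0, x, hx => h x hx
  | m + 1, x, hx => by
    show ∫ y in A..x, iterInt f A m y = 0
    rw [integral_congr (g := 0) fun y hy =>
      iterInt_eq_zero_of_le h m y (Set.uIcc_of_ge hx ▸ hy).2]
    simp

theorem iterInt_eq_of_eq_zero_of_le {f : ℝ → ℝ} (hf : Continuous f) {a A : ℝ} (ha : a ≤ A)
    (h : ∀ y ≤ A, f y = 0) : ∀ m x, iterInt f a m x = iterInt f A m x
  | 0, _ => rfl
  | m + 1, x => by
    have hint := (continuous_iterInt hf A m).intervalIntegrable (μ := MeasureTheory.volume)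
    calc iterInt f a (m + 1) x = ∫ y in a..x, iterInt f A m y :=
          integral_congr fun y _ => iterInt_eq_of_eq_zero_of_le hf ha h m y
      _ = iterInt f A (m + 1) x - iterInt f A (m + 1) a :=
          (integral_interval_sub_left (hint _ _) (hint _ _)).symm
      _ = iterInt f A (m + 1) x := by rw [iterInt_eq_zero_of_le h (m + 1) a ha, sub_zero]

theorem integral_sub_pow_div_factorial (B x : ℝ) (e : ℕ) :
    ∫ y in B..x, (y - B) ^ e / (e ! : ℝ) = (x - B) ^ (e + 1) / ((e + 1)! : ℝ) := by
  rw [integral_div, integral_comp_sub_right (fun y => y ^ e), sub_self, integral_pow,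
    Nat.factorial_succ]
  push_cast
  field_simp
  ring

theorem iterInt_succ_eq_add_integral {f : ℝ → ℝ} (hf : Continuous f) (A B x : ℝ) (m : ℕ) :
    iterInt f A (m + 1) x = iterInt f A (m + 1) B + ∫ y in B..x, iterInt f A m y :=
  (integral_add_adjacent_intervals ((continuous_iterInt hf A m).intervalIntegrable _ _)
    ((continuous_iterInt hf A m).intervalIntegrable _ _)).symm

theorem iterInt_succ_eq_sum_antidiagonal {f : ℝ → ℝ} (hf : Continuous f) (A : ℝ) {B : ℝ}
    (h : ∀ y, B ≤ y → f y = 0) :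
    ∀ m, ∀ x, B ≤ x → iterInt f A (m + 1) x
      = ∑ q ∈ antidiagonal m, iterInt f A (q.1 + 1) B * (x - B) ^ q.2 / (q.2 ! : ℝ)
  | 0, x, hx => by
    have hzero : ∫ y in B..x, iterInt f A 0 y = 0 := by
      simpa using integral_congr (f := iterInt f A 0) (g := 0) fun y hy =>
        h y (Set.uIcc_of_le hx ▸ hy).1
    rw [iterInt_succ_eq_add_integral hf A B x 0, hzero]
    simp
  | m + 1, x, hx => by
    have hintegral : ∫ y in B..x, iterInt f A (m + 1) y = ∑ q ∈ antidiagonal m,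
        iterInt f A (q.1 + 1) B * (x - B) ^ (q.2 + 1) / ((q.2 + 1)! : ℝ) := by
      rw [integral_congr fun y hy =>
        iterInt_succ_eq_sum_antidiagonal hf A h m y (Set.uIcc_of_le hx ▸ hy).1]
      rw [integral_finsetSum fun q _ => by apply Continuous.intervalIntegrable; fun_prop]
      refine sum_congr rfl fun q _ => ?_
      simp only [mul_div_assoc, integral_const_mul, integral_sub_pow_div_factorial]
    rw [iterInt_succ_eq_add_integral hf A B x (m + 1), hintegral, Nat.sum_antidiagonal_succ']
    simp

theorem iterInt_succ_eq_sum_antidiagonal_of_support {f : ℝ → ℝ} (hf : Continuous f)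
    {a A B x : ℝ} (ha : a ≤ A) (hx : B ≤ x) (hsupp : ∀ y ∉ Set.Icc A B, f y = 0) (m : ℕ) :
    iterInt f a (m + 1) x
      = ∑ q ∈ antidiagonal m, iterInt f A (q.1 + 1) B * (x - B) ^ q.2 / (q.2 ! : ℝ) := by
  have hleft : Set.EqOn f 0 (Set.Iio A) := fun y hy => hsupp y fun h => not_le.2 hy h.1
  have hright : Set.EqOn f 0 (Set.Ioi B) := fun y hy => hsupp y fun h => not_le.2 hy h.2
  rw [iterInt_eq_of_eq_zero_of_le hf ha fun y hy =>
      hleft.closure hf continuous_const (closure_Iio A ▸ hy),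
    iterInt_succ_eq_sum_antidiagonal hf A (fun y hy =>
      hright.closure hf continuous_const (closure_Ioi B ▸ hy)) m x hx]

theorem sum_mul_sub_pow_eq_ite {ι : Type*} (s : Finset ι) (c t : ι → ℝ) {N : ℕ}
    (hw : ∀ x, ∑ j ∈ s, c j * (t j - x) ^ N = 1) (z : ℝ) {e : ℕ} (he : e ≤ N) :
    ∑ j ∈ s, c j * (t j - z) ^ e = if e = N then 1 else 0 := by
  rcases he.eq_or_lt with rfl | hlt
  · simpa using hw z
  have hP : ∑ j ∈ s, C (c j) * (X + C (t j)) ^ N = 1 := Polynomial.funext fun x => by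
    simpa [eval_finsetSum, sub_neg_eq_add, add_comm] using hw (-x)
  have hD := congrArg (fun P => (derivative^[N - e] P).eval (-z)) hP
  simp only [iterate_derivative_sum, iterate_derivative_C_mul, iterate_derivative_X_add_pow,
    iterate_derivative_one (Nat.sub_pos_of_lt hlt), Nat.sub_sub_self he, eval_finsetSum] at hD
  simp only [eval_mul, eval_natCast, eval_pow, eval_add, eval_C, eval_X, eval_zero, nsmul_eq_mul,
    mul_left_comm (c _), ← mul_sum, neg_add_eq_sub] at hD
  have hdesc : (N.descFactorial (N - e) : ℝ) ≠ 0 :=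
    Nat.cast_ne_zero.2 (Nat.descFactorial_eq_zero_iff_lt.not.2 (Nat.sub_le N e).not_gt)
  rw [if_neg hlt.ne]
  exact (mul_eq_zero.1 hD).resolve_left hdesc

theorem sum_mul_sum_antidiagonal_of_moments {ι : Type*} (s : Finset ι) (c D : ι → ℝ)
    (w : ℕ → ℝ) {N : ℕ} {M : ℝ}
    (hM : ∀ e ≤ N, ∑ j ∈ s, c j * D j ^ e = if e = N then M else 0) :
    ∑ j ∈ s, c j * ∑ q ∈ antidiagonal N, w q.1 * D j ^ q.2 / (q.2 ! : ℝ) = w 0 * M / N ! := by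
  have hcoef : ∀ q ∈ antidiagonal N, ∑ j ∈ s, c j * (w q.1 * D j ^ q.2 / (q.2 ! : ℝ))
      = w q.1 / q.2 ! * if q.2 = N then M else 0 := fun q hq => by
    rw [← hM q.2 (HasAntidiagonal.antidiagonal.snd_le hq), mul_sum]
    exact sum_congr rfl fun j _ => by ring
  simp_rw [mul_sum]
  rw [sum_comm, sum_congr rfl hcoef, sum_eq_single (0, N)]
  · simp [mul_div_right_comm]
  · intro q hq hne
    have : q.2 ≠ N := fun h2 => hne (Prod.ext (by have := mem_antidiagonal.1 hq; omega) h2)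
    simp [this]
  · simp

theorem grid_index_lt_and_cast {k n i j : ℕ} (hn : 1 ≤ n) (hj : j < k) (hi : i < k * n) :
    n * (k - j) + i - 1 < 2 * k * n ∧
      ((n * (k - j) + i - 1 : ℕ) : ℝ) + 1 = n * ((k : ℝ) - j) + i := by
  have hlow : n ≤ n * (k - j) := Nat.le_mul_of_pos_right n (by omega)
  have hup : n * (k - j) ≤ k * n :=
    (Nat.mul_le_mul_left n (Nat.sub_le k j)).trans_eq (Nat.mul_comm n k)
  have hsucc : n * (k - j) + i - 1 + 1 = n * (k - j) + i := by omega
  refine ⟨by rw [mul_assoc]; omega, ?_⟩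
  rw [← Nat.cast_add_one, hsucc]
  push_cast [Nat.cast_sub hj.le]
  ring

theorem sum_mul_iterInt_shifted_pieces {a b hbar : ℝ} (hab : a ≤ b) {k n r : ℕ} (hk : 1 ≤ k)
    (hn : 1 ≤ n) (hhbar : hbar = (b - a) / (2 * k * n)) {f : ℕ → ℝ → ℝ}
    (hcont : ∀ p, Continuous (f p))
    (hsupp : ∀ p < 2 * k * n, ∀ x, x ∉ Set.Icc (a + p * hbar) (a + (p + 1) * hbar) → f p x = 0)
    {V : ℕ → ℝ} (hval : ∀ p < 2 * k * n, ∀ m, 1 ≤ m →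
      iterInt (f p) (a + p * hbar) m (a + (p + 1) * hbar) = hbar ^ (r + m) * V m)
    {c : ℕ → ℝ}
    (hw : ∀ x : ℝ, ∑ j ∈ range k, c j * (1 / 2 + (j : ℝ) / (2 * k) - x) ^ (k - 1) = 1)
    {i : ℕ} (hi : i < k * n) :
    ∑ j ∈ range k, c j * iterInt (f (n * (k - j) + i - 1)) a k b
      = hbar ^ (r + 1) * V 1 * (b - a) ^ (k - 1) / (k - 1)! := by
  obtain ⟨N, rfl⟩ : ∃ N, k = N + 1 := ⟨k - 1, by omega⟩
  simp only [Nat.add_sub_cancel] at hw ⊢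
  have hspan : 2 * ((N + 1 : ℕ) : ℝ) * n * hbar = b - a := by rw [hhbar]; field_simp
  have hbar_nonneg : 0 ≤ hbar := by
    rw [hhbar]; exact div_nonneg (sub_nonneg.2 hab) (by positivity)
  set t : ℕ → ℝ := fun j => 1 / 2 + (j : ℝ) / (2 * ((N + 1 : ℕ) : ℝ)) with ht
  set z : ℝ := (i : ℝ) / (2 * ((N + 1 : ℕ) : ℝ) * n) with hz
  have hpiece : ∀ j < N + 1, iterInt (f (n * (N + 1 - j) + i - 1)) a (N + 1) b
      = ∑ q ∈ antidiagonal N, hbar ^ (r + (q.1 + 1)) * V (q.1 + 1)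
          * ((b - a) * (t j - z)) ^ q.2 / (q.2 ! : ℝ) := by
    intro j hj
    obtain ⟨hp, hpcast⟩ := grid_index_lt_and_cast hn hj hi
    set p := n * (N + 1 - j) + i - 1
    have hA : a ≤ a + p * hbar := le_add_of_nonneg_right (by positivity)
    have hB : a + (p + 1) * hbar ≤ b := by
      have hle : (p : ℝ) + 1 ≤ 2 * ((N + 1 : ℕ) : ℝ) * n := by exact_mod_cast hp
      nlinarith
    have hgap : b - (a + (p + 1) * hbar) = (b - a) * (t j - z) := by
      rw [hpcast, show b = a + 2 * ((N + 1 : ℕ) : ℝ) * n * hbar by linarith]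
      simp only [ht, hz]
      field_simp
      ring
    rw [iterInt_succ_eq_sum_antidiagonal_of_support (hcont p) hA hB (hsupp p hp) N]
    refine sum_congr rfl fun q _ => ?_
    rw [hval p hp (q.1 + 1) (Nat.le_add_left 1 q.1), hgap]
  have hmoments : ∀ e ≤ N, ∑ j ∈ range (N + 1), c j * ((b - a) * (t j - z)) ^ e
      = if e = N then (b - a) ^ N else 0 := fun e he => by
    simp_rw [mul_pow, mul_left_comm (c _), ← mul_sum, sum_mul_sub_pow_eq_ite _ c t hw z he]
    split_ifs with h <;> simp [h]
  rw [sum_congr rfl fun j hj => by rw [hpiece j (mem_range.1 hj)]]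
  exact sum_mul_sum_antidiagonal_of_moments _ _ _
    (fun u => hbar ^ (r + (u + 1)) * V (u + 1)) hmoments

theorem stmt11_general (a b : ℝ) (hab : a < b) (k n r : ℕ) (hk : 1 ≤ k) (hn : 1 ≤ n)
    (hbar : ℝ) (hhbar : hbar = (b - a) / (2 * k * n))
    (f : ℕ → ℝ → ℝ) (hcont : ∀ p, Continuous (f p))
    (hsupp : ∀ p < 2 * k * n, ∀ x, x ∉ Set.Icc (a + p * hbar) (a + (p + 1) * hbar) → f p x = 0)
    (V : ℕ → ℝ)
    (hval : ∀ p < 2 * k * n, ∀ m, 1 ≤ m →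
      iterInt (f p) (a + p * hbar) m (a + (p + 1) * hbar) = hbar ^ (r + m) * V m)
    (c : ℕ → ℝ)
    (hw : ∀ x : ℝ, ∑ j ∈ Finset.range k, c j * (1 / 2 + (j : ℝ) / (2 * k) - x) ^ (k - 1) = 1)
    (lam : ℕ → ℝ) :
    ∑ j ∈ Finset.range k,
        c j * iterInt (fun y => ∑ i ∈ Finset.range (k * n), lam i * f (n * (k - j) + i - 1) y) a k b
      = (1 / ((k * n : ℕ) : ℝ)) ^ r * (b - a) ^ (k + r) * (1 / 2) ^ (r + 1)
          * (V 1 / ((k - 1).factorial : ℝ))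
          * ((1 / ((k * n : ℕ) : ℝ)) * ∑ i ∈ Finset.range (k * n), lam i) := by
  have hbar_eq : hbar = (b - a) * (1 / (k * n : ℕ)) * (1 / 2) := by
    rw [hhbar, Nat.cast_mul]; ring
  have hpow : (b - a) ^ (k + r) = (b - a) ^ (k - 1) * (b - a) ^ (r + 1) := by
    rw [← pow_add]; congr 1; omega
  calc _ = ∑ i ∈ range (k * n), lam i * ∑ j ∈ range k,
          c j * iterInt (f (n * (k - j) + i - 1)) a k b := by
        simp_rw [iterInt_finset_sum_mul _ lam (fun i _ => hcont _), mul_sum, mul_left_comm (c _)]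
        exact sum_comm
    _ = ∑ i ∈ range (k * n), lam i * (hbar ^ (r + 1) * V 1 * (b - a) ^ (k - 1) / (k - 1)!) :=
        sum_congr rfl fun i hi => by
          rw [sum_mul_iterInt_shifted_pieces hab.le hk hn hhbar hcont hsupp hval hw
            (mem_range.1 hi)]
    _ = _ := by
        rw [← sum_mul, hbar_eq, hpow]
        generalize b - a = L
        ring

theorem stmt11 (a b : ℝ) (hab : a < b) (k n r : ℕ) (hk : 1 ≤ k) (hn : 1 ≤ n) (hr : 1 ≤ r)
    (hbar : ℝ) (hhbar : hbar = (b - a) / (2 * k * n))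
    (f : ℕ → ℝ → ℝ) (hcont : ∀ p, Continuous (f p))
    (hsupp : ∀ p < 2 * k * n, ∀ x, x ∉ Set.Icc (a + p * hbar) (a + (p + 1) * hbar) → f p x = 0)
    (V : ℕ → ℝ)
    (hval : ∀ p < 2 * k * n, ∀ m, 1 ≤ m →
      iterInt (f p) (a + p * hbar) m (a + (p + 1) * hbar) = hbar ^ (r + m) * V m)
    (c : ℕ → ℝ)
    (hw : ∀ x : ℝ, ∑ j ∈ Finset.range k, c j * (1 / 2 + (j : ℝ) / (2 * k) - x) ^ (k - 1) = 1)
    (lam : ℕ → ℝ) :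
    ∑ j ∈ Finset.range k,
        c j * iterInt (fun y => ∑ i ∈ Finset.range (k * n), lam i * f (n * (k - j) + i - 1) y) a k b
      = (1 / ((k * n : ℕ) : ℝ)) ^ r * (b - a) ^ (k + r) * (1 / 2) ^ (r + 1)
          * (V 1 / ((k - 1).factorial : ℝ))
          * ((1 / ((k * n : ℕ) : ℝ)) * ∑ i ∈ Finset.range (k * n), lam i) :=
  stmt11_general a b hab k n r hk hn hbar hhbar f hcont hsupp V hval c hw lam
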